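/- Every nested set of bonds of a finite connected graph G is the set of fundamental cuts of some tree-cut decomposition of G. -/

import Mathlib

/-!
Orient each pair `{A, Aᶜ}` of the nested system `N = M ∪ {Aᶜ | A ∈ M}`, consistently (upwards
closed). The consistent orientations, adjacent when they differ in a single pair, form a tree: one
walks from `O` to `O'` by flipping ⊆-minimal elements of `O \ O'`, and by nestedness there is only
one orientation in which a given `A` is minimal, so each `A` is flipped along exactly one edge,
which is therefore a bridge. Placing each vertex `v` at the orientation `{B ∈ N | v ∈ B}`, the
side of the edge flipping `A` that contains the orientations containing `A` holds exactly the
vertices of `A`, so the fundamental cut of that edge is the cut of `A`.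
-/

open SimpleGraph

variable {V : Type*}

/-- The cut induced by a side `A`: edges of `G` with one endpoint in `A` and one outside. -/
def cutEdges (G : SimpleGraph V) (A : Set V) : Set (Sym2 V) :=
  {e | ∃ u v, e = s(u, v) ∧ G.Adj u v ∧ u ∈ A ∧ v ∉ A}

/-- A cut-separation, given by a side `A`: both sides nonempty. -/
def IsCutSep (_G : SimpleGraph V) (A : Set V) : Prop :=
  A.Nonempty ∧ Aᶜ.Nonempty

/-- A bond-separation: a cut-separation both of whose sides induce connected subgraphs. -/
def IsBondSep (G : SimpleGraph V) (A : Set V) : Prop :=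
  A.Nonempty ∧ Aᶜ.Nonempty ∧ (G.induce A).Connected ∧ (G.induce Aᶜ).Connected

/-- Two separations (given by sides) are nested. -/
def Nested (A C : Set V) : Prop :=
  A ⊆ C ∨ A ⊆ Cᶜ ∨ Aᶜ ⊆ C ∨ Aᶜ ⊆ Cᶜ

/-- Two separations cross if they are not nested. -/
def Crosses (A C : Set V) : Prop := ¬ Nested A C

/-- `u` and `v` are (<k)-inseparable: no edge set of size < k separates them. -/
def Insep (G : SimpleGraph V) (k : ℕ) (u v : V) : Prop :=
  ∀ F : Set (Sym2 V), F.Finite → F.ncard < k → (G.deleteEdges F).Reachable u v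

/-- A k-edge-block: an equivalence class of (<k)-inseparability. -/
def IsEdgeBlock (G : SimpleGraph V) (k : ℕ) (B : Set V) : Prop :=
  ∃ v, B = {w | Insep G k v w}

/-- The edge set `F` separates `B₁` from `B₂` in `G`. -/
def SepSets (G : SimpleGraph V) (B₁ B₂ : Set V) (F : Set (Sym2 V)) : Prop :=
  ∀ u ∈ B₁, ∀ v ∈ B₂, ¬ (G.deleteEdges F).Reachable u v

/-- The minimum size of an edge set separating `B₁` from `B₂`. -/
noncomputable def sepOrder (G : SimpleGraph V) (B₁ B₂ : Set V) : ℕ :=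
  sInf {n | ∃ F : Set (Sym2 V), F.Finite ∧ F.ncard = n ∧ SepSets G B₁ B₂ F}

lemma cutEdges_compl (G : SimpleGraph V) (A : Set V) :
    cutEdges G Aᶜ = cutEdges G A := by
  ext e
  constructor <;>
  · rintro ⟨u, v, rfl, huv, hu, hv⟩
    exact ⟨v, u, Sym2.eq_swap, huv.symm, by simpa using hv, by simpa using hu⟩

namespace Nested

variable {A C : Set V}

lemma symm (h : Nested A C) : Nested C A := by
  rcases h with h | h | h | h
  · exact .inr <| .inr <| .inr <| Set.compl_subset_compl.mpr h
  · exact .inr <| .inl <| Set.subset_compl_comm.mp h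
  · exact .inr <| .inr <| .inl <| Set.compl_subset_comm.mp h
  · exact .inl <| Set.compl_subset_compl.mp h

lemma compl_left (h : Nested A C) : Nested Aᶜ C := by
  unfold Nested at *
  rw [compl_compl]
  tauto

end Nested

structure IsNestedSystem (N : Set (Set V)) : Prop where
  nonempty : ∀ A ∈ N, A.Nonempty
  compl_mem : ∀ A ∈ N, Aᶜ ∈ N
  nested : ∀ A ∈ N, ∀ C ∈ N, Nested A C

lemma isNestedSystem_compl_closure {M : Set (Set V)}
    (hM : ∀ A ∈ M, A.Nonempty ∧ Aᶜ.Nonempty) (hnested : ∀ A ∈ M, ∀ C ∈ M, Nested A C) :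
    IsNestedSystem {A | A ∈ M ∨ Aᶜ ∈ M} where
  nonempty := by
    rintro A (hA | hA)
    · exact (hM A hA).1
    · simpa using (hM _ hA).2
  compl_mem := by
    rintro A (hA | hA)
    · exact Or.inr (by rwa [compl_compl])
    · exact Or.inl hA
  nested := by
    have key : ∀ A, A ∈ M ∨ Aᶜ ∈ M → ∃ A' ∈ M, ∀ C, Nested A' C → Nested A C := by
      rintro A (hA | hA)
      · exact ⟨A, hA, fun _ => id⟩
      · exact ⟨Aᶜ, hA, fun C h => by simpa using h.compl_left⟩
    intro A hA C hC
    obtain ⟨A', hA', hA⟩ := key A hA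
    obtain ⟨C', hC', hC⟩ := key C hC
    exact hA _ (hC _ (hnested C' hC' A' hA')).symm

lemma image_cutEdges_compl_closure (G : SimpleGraph V) (M : Set (Set V)) :
    cutEdges G '' {A | A ∈ M ∨ Aᶜ ∈ M} = {F | ∃ A ∈ M, F = cutEdges G A} := by
  ext F
  constructor
  · rintro ⟨A, hA | hA, rfl⟩
    exacts [⟨A, hA, rfl⟩, ⟨Aᶜ, hA, (cutEdges_compl G A).symm⟩]
  · rintro ⟨A, hA, rfl⟩
    exact ⟨A, .inl hA, rfl⟩

section TreeCutDecomposition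

variable {τ τ' : Type*} {T : SimpleGraph τ} {T' : SimpleGraph τ'}

structure IsTreeCutDecomposition (T : SimpleGraph τ) (X : τ → Set V) : Prop where
  connected : T.Connected
  isAcyclic : T.IsAcyclic
  iUnion_eq_univ : ⋃ t, X t = Set.univ
  pairwise_disjoint : Pairwise fun s t => Disjoint (X s) (X t)
  dense : ∀ ⦃t₁ t₂⦄, T.Adj t₁ t₂ → ∃ (s₁ s₂ : τ) (p : T.Walk s₁ s₂),
    (X s₁).Nonempty ∧ (X s₂).Nonempty ∧ p.IsPath ∧ s(t₁, t₂) ∈ p.edges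

def fundamentalSide (T : SimpleGraph τ) (X : τ → Set V) (t₁ t₂ : τ) : Set V :=
  ⋃ t ∈ {t | (T.deleteEdges {s(t₁, t₂)}).Reachable t₁ t}, X t

def fundamentalSides (T : SimpleGraph τ) (X : τ → Set V) : Set (Set V) :=
  {S | ∃ t₁ t₂, T.Adj t₁ t₂ ∧ S = fundamentalSide T X t₁ t₂}

lemma image_cutEdges_fundamentalSides (G : SimpleGraph V) (T : SimpleGraph τ) (X : τ → Set V) :
    cutEdges G '' fundamentalSides T X =
      {F | ∃ t₁ t₂, T.Adj t₁ t₂ ∧ F = cutEdges G (fundamentalSide T X t₁ t₂)} := by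
  ext F
  constructor
  · rintro ⟨S, ⟨t₁, t₂, hadj, rfl⟩, rfl⟩
    exact ⟨t₁, t₂, hadj, rfl⟩
  · rintro ⟨t₁, t₂, hadj, rfl⟩
    exact ⟨_, ⟨t₁, t₂, hadj, rfl⟩, rfl⟩

def SimpleGraph.Iso.deleteEdgesSingleton (ψ : T ≃g T') (a b : τ) :
    T.deleteEdges {s(a, b)} ≃g T'.deleteEdges {s(ψ a, ψ b)} where
  toEquiv := ψ.toEquiv
  map_rel_iff' := by simp [ψ.map_adj_iff]

lemma IsTreeCutDecomposition.map_iso {X : τ → Set V} (h : IsTreeCutDecomposition T X)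
    (ψ : T ≃g T') : IsTreeCutDecomposition T' (X ∘ ψ.symm) where
  connected := ψ.connected_iff.mp h.connected
  isAcyclic := ψ.isAcyclic_iff.mp h.isAcyclic
  iUnion_eq_univ := by rw [← h.iUnion_eq_univ]; exact ψ.symm.surjective.iUnion_comp X
  pairwise_disjoint := fun s t hst => h.pairwise_disjoint (ψ.symm.injective.ne hst)
  dense := by
    intro t₁ t₂ hadj
    obtain ⟨s₁, s₂, p, h₁, h₂, hp, he⟩ := h.dense (ψ.symm.map_adj_iff.mpr hadj)
    refine ⟨ψ s₁, ψ s₂, p.map ψ.toHom, by simpa using h₁, by simpa using h₂,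
      hp.map ψ.injective, ?_⟩
    rw [Walk.edges_map]
    simpa using List.mem_map_of_mem (f := Sym2.map ψ) he

lemma fundamentalSide_iso (ψ : T ≃g T') (X : τ → Set V) (t₁ t₂ : τ) :
    fundamentalSide T' (X ∘ ψ.symm) (ψ t₁) (ψ t₂) = fundamentalSide T X t₁ t₂ := by
  have hreach (t : τ) : (T'.deleteEdges {s(ψ t₁, ψ t₂)}).Reachable (ψ t₁) (ψ t) ↔
      (T.deleteEdges {s(t₁, t₂)}).Reachable t₁ t :=
    (ψ.deleteEdgesSingleton t₁ t₂).reachable_iff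
  ext v
  simp only [fundamentalSide, Set.mem_iUnion, Set.mem_ofPred_eq, exists_prop, Function.comp_apply]
  constructor
  · rintro ⟨t, ht, hv⟩
    exact ⟨ψ.symm t, (hreach _).mp (by rwa [RelIso.apply_symm_apply]), hv⟩
  · rintro ⟨t, ht, hv⟩
    exact ⟨ψ t, (hreach t).mpr ht, by simpa using hv⟩

lemma fundamentalSides_iso (ψ : T ≃g T') (X : τ → Set V) :
    fundamentalSides T' (X ∘ ψ.symm) = fundamentalSides T X := by
  ext S
  constructor
  · rintro ⟨t₁, t₂, hadj, rfl⟩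
    refine ⟨ψ.symm t₁, ψ.symm t₂, ψ.symm.map_adj_iff.mpr hadj, ?_⟩
    rw [← fundamentalSide_iso ψ, RelIso.apply_symm_apply, RelIso.apply_symm_apply]
  · rintro ⟨t₁, t₂, hadj, rfl⟩
    exact ⟨ψ t₁, ψ t₂, ψ.map_adj_iff.mpr hadj, (fundamentalSide_iso ψ X t₁ t₂).symm⟩

end TreeCutDecomposition

lemma SimpleGraph.Preconnected.reachable_deleteEdges_or {τ : Type*} {T : SimpleGraph τ}
    (hT : T.Preconnected) (u v w : τ) :
    (T.deleteEdges {s(u, v)}).Reachable u w ∨ (T.deleteEdges {s(u, v)}).Reachable v w := by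
  have key : ∀ {x y : τ}, T.Walk x y → y = u →
      (T.deleteEdges {s(u, v)}).Reachable u x ∨ (T.deleteEdges {s(u, v)}).Reachable v x := by
    intro x y p
    induction p with
    | nil => rintro rfl; exact .inl .rfl
    | @cons x y _ hxy _ ih =>
      intro hu
      by_cases he : s(x, y) = s(u, v)
      · rcases Sym2.eq_iff.mp he with ⟨rfl, -⟩ | ⟨rfl, -⟩
        exacts [.inl .rfl, .inr .rfl]
      · have hyx : (T.deleteEdges {s(u, v)}).Adj y x :=
          deleteEdges_adj.mpr ⟨hxy.symm, by simpa [Sym2.eq_swap] using he⟩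
        exact (ih hu).imp (·.trans hyx.reachable) (·.trans hyx.reachable)
  exact key (hT w u).some rfl

section Orientations

variable {N O P : Set (Set V)} {A B : Set V}

structure IsConsistentOrientation (N O : Set (Set V)) : Prop where
  subset : O ⊆ N
  mem_iff_compl_notMem : ∀ B ∈ N, B ∈ O ↔ Bᶜ ∉ O
  mem_of_subset : ∀ B ∈ O, ∀ C ∈ N, B ⊆ C → C ∈ O

abbrev ConsistentOrientation (N : Set (Set V)) : Type _ :=
  {O : Set (Set V) // IsConsistentOrientation N O}

def flipAt (O : Set (Set V)) (A : Set V) : Set (Set V) := insert Aᶜ (O \ {A})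

def pointOrientation (N : Set (Set V)) (v : V) : Set (Set V) := {B ∈ N | v ∈ B}

namespace IsConsistentOrientation

lemma compl_notMem (hO : IsConsistentOrientation N O) (hA : A ∈ O) : Aᶜ ∉ O :=
  (hO.mem_iff_compl_notMem A (hO.subset hA)).mp hA

lemma compl_mem (hO : IsConsistentOrientation N O) (hAN : A ∈ N) (hA : A ∉ O) : Aᶜ ∈ O :=
  not_not.mp fun h => hA ((hO.mem_iff_compl_notMem A hAN).mpr h)

lemma ne_compl (hO : IsConsistentOrientation N O) (hA : A ∈ O) : A ≠ Aᶜ :=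
  fun h => hO.compl_notMem hA (h ▸ hA)

lemma eq_of_subset (hO : IsConsistentOrientation N O) (hP : IsConsistentOrientation N P)
    (h : O ⊆ P) : O = P := by
  refine h.antisymm fun B hB => not_not.mp fun hBO => ?_
  exact hP.compl_notMem hB (h (hO.compl_mem (hP.subset hB) hBO))

lemma eq_of_minimal (hN : IsNestedSystem N) (hO : IsConsistentOrientation N O)
    (hP : IsConsistentOrientation N P) (hAO : Minimal (· ∈ O) A) (hAP : Minimal (· ∈ P) A) :
    O = P := by
  refine hO.eq_of_subset hP fun B hB => not_not.mp fun hBP => ?_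
  have hAN := hO.subset hAO.prop
  have hBN := hO.subset hB
  rcases hN.nested A hAN B hBN with h | h | h | h
  · exact hBP (hP.mem_of_subset A hAP.prop B hBN h)
  · exact hO.compl_notMem hB (hO.mem_of_subset A hAO.prop _ (hN.compl_mem B hBN) h)
  · have hBA : Bᶜ = A := hAP.eq_of_le (hP.compl_mem hBN hBP) (Set.compl_subset_comm.mp h)
    exact hO.compl_notMem hAO.prop (by rwa [← hBA, compl_compl])
  · exact hBP (hAO.eq_of_le hB (Set.compl_subset_compl.mp h) ▸ hAP.prop)

end IsConsistentOrientation

lemma flipAt_flipAt (hO : IsConsistentOrientation N O) (hA : A ∈ O) :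
    flipAt (flipAt O A) Aᶜ = O := by
  have hAc := hO.compl_notMem hA
  ext B
  simp only [flipAt, compl_compl, Set.mem_insert_iff, Set.mem_sdiff, Set.mem_singleton_iff]
  grind

lemma notMem_flipAt_self (hA : A ≠ Aᶜ) : A ∉ flipAt O A := by
  simp [flipAt, hA]

lemma eq_of_mem_of_notMem_flipAt (hA : A ∈ O) (hflip : A ∉ flipAt O B) : A = B := by
  simp only [flipAt, Set.mem_insert_iff, Set.mem_sdiff, Set.mem_singleton_iff] at hflip
  tauto

lemma isConsistentOrientation_flipAt (hN : IsNestedSystem N) (hO : IsConsistentOrientation N O)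
    (hA : Minimal (· ∈ O) A) : IsConsistentOrientation N (flipAt O A) := by
  have hAN := hO.subset hA.prop
  have hAc := hO.compl_notMem hA.prop
  have hAAc := hO.ne_compl hA.prop
  refine ⟨?_, fun B hB => ?_, fun B hB C hC hBC => ?_⟩
  · rintro B (rfl | ⟨hB, -⟩)
    exacts [hN.compl_mem A hAN, hO.subset hB]
  · by_cases hBA : B = A
    · subst hBA
      simp [flipAt, hAAc]
    by_cases hBAc : B = Aᶜ
    · subst hBAc
      simp [flipAt, hAAc, hAAc.symm]
    have hBcA : Bᶜ ≠ A := fun h => hBAc (by rw [← h, compl_compl])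
    have hBcAc : Bᶜ ≠ Aᶜ := compl_injective.ne hBA
    simp only [flipAt, Set.mem_insert_iff, Set.mem_sdiff, Set.mem_singleton_iff, hBA, hBAc, hBcA,
      hBcAc, false_or, not_false_eq_true, and_true]
    exact hO.mem_iff_compl_notMem B hB
  · simp only [flipAt, Set.mem_insert_iff, Set.mem_sdiff, Set.mem_singleton_iff] at hB ⊢
    by_cases hCAc : C = Aᶜ
    · exact .inl hCAc
    refine .inr ⟨?_, ?_⟩
    · rcases hB with rfl | ⟨hBO, -⟩
      · refine not_not.mp fun hCO => hCAc ?_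
        have hCcA := hA.eq_of_le (hO.compl_mem hC hCO) (Set.compl_subset_comm.mp hBC)
        rw [← hCcA, compl_compl]
      · exact hO.mem_of_subset B hBO C hC hBC
    · rintro rfl
      rcases hB with rfl | ⟨hBO, hBC'⟩
      · obtain ⟨v, hv⟩ := hN.nonempty _ (hN.compl_mem _ hAN)
        exact hv (hBC hv)
      · exact hBC' (hA.eq_of_le hBO hBC)

lemma minimal_of_isConsistentOrientation_flipAt (hO : IsConsistentOrientation N O) (hA : A ∈ O)
    (hflip : IsConsistentOrientation N (flipAt O A)) : Minimal (· ∈ O) A := by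
  refine ⟨hA, fun C hC hCA => not_not.mp fun hAC => ?_⟩
  have hCA' : C ≠ A := by rintro rfl; exact hAC le_rfl
  have hAflip := hflip.mem_of_subset C (.inr ⟨hC, hCA'⟩) A (hO.subset hA) hCA
  exact hO.ne_compl hA (by simpa [flipAt] using hAflip)

lemma isConsistentOrientation_pointOrientation (hN : ∀ A ∈ N, Aᶜ ∈ N) (v : V) :
    IsConsistentOrientation N (pointOrientation N v) where
  subset _ hB := hB.1
  mem_iff_compl_notMem B hB := by simp [pointOrientation, hB, hN B hB]
  mem_of_subset _ hB C hC hBC := ⟨hC, hBC hB.2⟩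

lemma nonempty_consistentOrientation (hN : IsNestedSystem N) :
    Nonempty (ConsistentOrientation N) := by
  rcases isEmpty_or_nonempty V with hV | ⟨⟨v⟩⟩
  · refine ⟨⟨∅, Set.empty_subset N, fun B hB => ?_, fun B hB => absurd hB (Set.notMem_empty B)⟩⟩
    obtain ⟨v, -⟩ := hN.nonempty B hB
    exact isEmptyElim v
  · exact ⟨⟨_, isConsistentOrientation_pointOrientation hN.compl_mem v⟩⟩

end Orientations

section StructureTree

variable {N : Set (Set V)} {A : Set V} {t₁ t₂ : ConsistentOrientation N}

def structureTree (N : Set (Set V)) : SimpleGraph (ConsistentOrientation N) where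
  Adj t₁ t₂ := ∃ A ∈ t₁.1, t₂.1 = flipAt t₁.1 A
  symm := ⟨fun t₁ _ ⟨A, hA, h⟩ =>
    ⟨Aᶜ, by rw [h]; exact Set.mem_insert _ _, by rw [h, flipAt_flipAt t₁.2 hA]⟩⟩
  loopless := ⟨fun t ⟨A, hA, h⟩ => t.2.compl_notMem hA (by rw [h]; exact Set.mem_insert _ _)⟩

lemma structureTree_adj : (structureTree N).Adj t₁ t₂ ↔ ∃ A ∈ t₁.1, t₂.1 = flipAt t₁.1 A :=
  Iff.rfl

def orientationPart (N : Set (Set V)) (t : ConsistentOrientation N) : Set V :=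
  {v | t.1 = pointOrientation N v}

lemma exists_mem_notMem_orientationPart_nonempty (hN : IsNestedSystem N) (hAN : A ∈ N) :
    ∃ P Q : ConsistentOrientation N, A ∈ P.1 ∧ A ∉ Q.1 ∧
      (orientationPart N P).Nonempty ∧ (orientationPart N Q).Nonempty := by
  obtain ⟨u, hu⟩ := hN.nonempty A hAN
  obtain ⟨w, hw⟩ := hN.nonempty _ (hN.compl_mem A hAN)
  exact ⟨⟨_, isConsistentOrientation_pointOrientation hN.compl_mem u⟩,
    ⟨_, isConsistentOrientation_pointOrientation hN.compl_mem w⟩,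
    ⟨hAN, hu⟩, fun h => hw h.2, ⟨u, rfl⟩, ⟨w, rfl⟩⟩

lemma edge_eq_of_flipAt_of_flipAt (hN : IsNestedSystem N) {s₁ s₂ : ConsistentOrientation N}
    (hA₁ : A ∈ t₁.1) (h₁ : t₂.1 = flipAt t₁.1 A) (hA₂ : A ∈ s₁.1) (h₂ : s₂.1 = flipAt s₁.1 A) :
    s(s₁, s₂) = s(t₁, t₂) := by
  have hs₁ : s₁ = t₁ := Subtype.ext <| s₁.2.eq_of_minimal hN t₁.2
    (minimal_of_isConsistentOrientation_flipAt s₁.2 hA₂ (h₂ ▸ s₂.2))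
    (minimal_of_isConsistentOrientation_flipAt t₁.2 hA₁ (h₁ ▸ t₂.2))
  have hs₂ : s₂ = t₂ := Subtype.ext <| by rw [h₁, h₂, hs₁]
  rw [hs₁, hs₂]

lemma not_reachable_deleteEdges_structureTree (hN : IsNestedSystem N) (hA : A ∈ t₁.1)
    (h : t₂.1 = flipAt t₁.1 A) {P Q : ConsistentOrientation N} (hP : A ∈ P.1) (hQ : A ∉ Q.1) :
    ¬((structureTree N).deleteEdges {s(t₁, t₂)}).Reachable P Q := by
  rintro ⟨p⟩
  -- `p` must flip `A` somewhere, and `A` is flipped along one edge only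
  obtain ⟨d, -, hd₁, hd₂⟩ := p.exists_boundary_dart {t | A ∈ t.1} hP hQ
  obtain ⟨hadj, hne⟩ := deleteEdges_adj.mp d.adj
  obtain ⟨B, hB, hflip⟩ := structureTree_adj.mp hadj
  have hBA : A = B := eq_of_mem_of_notMem_flipAt hd₁ (hflip ▸ hd₂)
  subst hBA
  exact hne (edge_eq_of_flipAt_of_flipAt hN hA h hB hflip)

lemma reachable_structureTree [Finite V] (hN : IsNestedSystem N) (O O' : ConsistentOrientation N) :
    (structureTree N).Reachable O O' := by
  induction hn : (O.1 \ O'.1).ncard using Nat.strong_induction_on generalizing O with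
  | _ n ih =>
  rcases (O.1 \ O'.1).eq_empty_or_nonempty with hemp | hne
  · obtain rfl := Subtype.ext (O.2.eq_of_subset O'.2 (Set.sdiff_eq_empty.mp hemp))
    exact .rfl
  obtain ⟨A, hAmin⟩ := exists_minimal_of_wellFoundedLT (· ∈ O.1 \ O'.1) hne
  obtain ⟨⟨hAO, hAO'⟩, hAle⟩ := hAmin
  have hA : Minimal (· ∈ O.1) A := ⟨hAO, fun C hC hCA =>
    hAle ⟨hC, fun hC' => hAO' (O'.2.mem_of_subset C hC' A (O.2.subset hAO) hCA)⟩ hCA⟩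
  let O'' : ConsistentOrientation N := ⟨flipAt O.1 A, isConsistentOrientation_flipAt hN O.2 hA⟩
  have hadj : (structureTree N).Adj O O'' := structureTree_adj.mpr ⟨A, hAO, rfl⟩
  have hlt : (O''.1 \ O'.1).ncard < n := by
    rw [← hn]
    refine Set.ncard_lt_ncard ⟨?_, fun h => notMem_flipAt_self (O.2.ne_compl hAO) (h ⟨hAO, hAO'⟩).1⟩
    · rintro B ⟨rfl | ⟨hBO, -⟩, hB'⟩
      exacts [absurd (O'.2.compl_mem (O.2.subset hAO) hAO') hB', ⟨hBO, hB'⟩]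
  exact hadj.reachable.trans (ih _ hlt O'' rfl)

lemma connected_structureTree [Finite V] (hN : IsNestedSystem N) : (structureTree N).Connected :=
  have := nonempty_consistentOrientation hN
  ⟨reachable_structureTree hN⟩

lemma isAcyclic_structureTree (hN : IsNestedSystem N) : (structureTree N).IsAcyclic :=
  isAcyclic_iff_forall_adj_isBridge.mpr fun t₁ t₂ hadj => by
    obtain ⟨A, hA, h⟩ := structureTree_adj.mp hadj
    exact not_reachable_deleteEdges_structureTree hN hA h hA
      (h ▸ notMem_flipAt_self (t₁.2.ne_compl hA))

end StructureTree

section StructureTreeDecomposition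

variable [Finite V] {N : Set (Set V)} {A : Set V} {t₁ t₂ : ConsistentOrientation N}

lemma reachable_deleteEdges_structureTree_iff (hN : IsNestedSystem N) (hA : A ∈ t₁.1)
    (h : t₂.1 = flipAt t₁.1 A) (t : ConsistentOrientation N) :
    ((structureTree N).deleteEdges {s(t₁, t₂)}).Reachable t₁ t ↔ A ∈ t.1 := by
  refine ⟨fun ht => not_not.mp fun hAt =>
    not_reachable_deleteEdges_structureTree hN hA h hA hAt ht, fun hAt => ?_⟩
  refine ((connected_structureTree hN).preconnected.reachable_deleteEdges_or t₁ t₂ t).resolve_right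
    fun ht => not_reachable_deleteEdges_structureTree hN hA h hAt ?_ ht.symm
  exact h ▸ notMem_flipAt_self (t₁.2.ne_compl hA)

lemma fundamentalSide_structureTree (hN : IsNestedSystem N) (hA : A ∈ t₁.1)
    (h : t₂.1 = flipAt t₁.1 A) :
    fundamentalSide (structureTree N) (orientationPart N) t₁ t₂ = A := by
  ext v
  simp only [fundamentalSide, Set.mem_iUnion, Set.mem_ofPred_eq, exists_prop,
    reachable_deleteEdges_structureTree_iff hN hA h]
  constructor
  · rintro ⟨t, hAt, hv⟩
    rw [show t.1 = pointOrientation N v from hv] at hAt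
    exact hAt.2
  · intro hv
    exact ⟨⟨_, isConsistentOrientation_pointOrientation hN.compl_mem v⟩, ⟨t₁.2.subset hA, hv⟩, rfl⟩

lemma fundamentalSides_structureTree (hN : IsNestedSystem N) :
    fundamentalSides (structureTree N) (orientationPart N) = N := by
  ext A
  constructor
  · rintro ⟨t₁, t₂, hadj, rfl⟩
    obtain ⟨B, hB, h⟩ := structureTree_adj.mp hadj
    rw [fundamentalSide_structureTree hN hB h]
    exact t₁.2.subset hB
  · intro hAN
    obtain ⟨P, Q, hP, hQ, -⟩ := exists_mem_notMem_orientationPart_nonempty hN hAN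
    obtain ⟨p⟩ := (connected_structureTree hN).preconnected P Q
    obtain ⟨d, -, hd₁, hd₂⟩ := p.exists_boundary_dart {t | A ∈ t.1} hP hQ
    obtain ⟨B, hB, h⟩ := structureTree_adj.mp d.adj
    obtain rfl : A = B := eq_of_mem_of_notMem_flipAt hd₁ (h ▸ hd₂)
    exact ⟨d.fst, d.snd, d.adj, (fundamentalSide_structureTree hN hB h).symm⟩

theorem isTreeCutDecomposition_structureTree (hN : IsNestedSystem N) :
    IsTreeCutDecomposition (structureTree N) (orientationPart N) where
  connected := connected_structureTree hN
  isAcyclic := isAcyclic_structureTree hN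
  iUnion_eq_univ := Set.eq_univ_of_forall fun v => Set.mem_iUnion.mpr
    ⟨⟨_, isConsistentOrientation_pointOrientation hN.compl_mem v⟩, rfl⟩
  pairwise_disjoint _ _ hst :=
    Set.disjoint_left.mpr fun _ hs ht => hst (Subtype.ext (hs.trans ht.symm))
  dense t₁ t₂ hadj := by
    obtain ⟨A, hA, h⟩ := structureTree_adj.mp hadj
    obtain ⟨P, Q, hP, hQ, hPX, hQX⟩ :=
      exists_mem_notMem_orientationPart_nonempty hN (t₁.2.subset hA)
    let p := ((connected_structureTree hN).preconnected P Q).some.toPath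
    exact ⟨P, Q, p.1, hPX, hQX, p.2, p.1.mem_edges_of_not_reachable_deleteEdges
      (not_reachable_deleteEdges_structureTree hN hA h hP hQ)⟩

end StructureTreeDecomposition

theorem stmt_12_general [Fintype V] (G : SimpleGraph V)
    (M : Set (Set V)) (hM : ∀ A ∈ M, IsBondSep G A)
    (hnested : ∀ A ∈ M, ∀ C ∈ M, Nested A C) :
    ∃ (τ : Type) (_ : Fintype τ) (T : SimpleGraph τ) (X : τ → Set V),
      T.Connected ∧ T.IsAcyclic ∧
      -- near-partition of V(G)
      (⋃ t, X t) = Set.univ ∧ (Pairwise fun s t => Disjoint (X s) (X t)) ∧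
      -- nodes with nonempty parts are dense in T
      (∀ ⦃t₁ t₂⦄, T.Adj t₁ t₂ → ∃ (s₁ s₂ : τ) (p : T.Walk s₁ s₂),
        (X s₁).Nonempty ∧ (X s₂).Nonempty ∧ p.IsPath ∧ s(t₁, t₂) ∈ p.edges) ∧
      -- the fundamental cuts are exactly the bonds in M
      {F | ∃ t₁ t₂, T.Adj t₁ t₂ ∧
        F = cutEdges G (⋃ t ∈ {t | (T.deleteEdges {s(t₁, t₂)}).Reachable t₁ t}, X t)}
        = {F | ∃ A ∈ M, F = cutEdges G A} := by
  have hN := isNestedSystem_compl_closure (fun A hA => ⟨(hM A hA).1, (hM A hA).2.1⟩) hnested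
  let ψ := Iso.map (Finite.equivFin _) (structureTree {A | A ∈ M ∨ Aᶜ ∈ M})
  obtain ⟨hconn, hacyc, hunion, hdisj, hdense⟩ :=
    (isTreeCutDecomposition_structureTree hN).map_iso ψ
  refine ⟨_, inferInstance, _, _, hconn, hacyc, hunion, hdisj, hdense, ?_⟩
  have hsides : fundamentalSides _ (orientationPart _ ∘ ψ.symm) = {A | A ∈ M ∨ Aᶜ ∈ M} :=
    (fundamentalSides_iso ψ _).trans (fundamentalSides_structureTree hN)
  calc _ = cutEdges G '' fundamentalSides _ (orientationPart _ ∘ ψ.symm) :=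
        (image_cutEdges_fundamentalSides G _ _).symm
    _ = _ := by rw [hsides, image_cutEdges_compl_closure]

/-- Theorem 4.3 (finite case): every nested set of bonds of a finite connected graph
is the set of fundamental cuts of some tree-cut decomposition. -/
theorem stmt_12 [Fintype V] (G : SimpleGraph V) (hG : G.Connected)
    (M : Set (Set V)) (hM : ∀ A ∈ M, IsBondSep G A)
    (hnested : ∀ A ∈ M, ∀ C ∈ M, Nested A C) :
    ∃ (τ : Type) (_ : Fintype τ) (T : SimpleGraph τ) (X : τ → Set V),
      T.Connected ∧ T.IsAcyclic ∧
      -- near-partition of V(G)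
      (⋃ t, X t) = Set.univ ∧ (Pairwise fun s t => Disjoint (X s) (X t)) ∧
      -- nodes with nonempty parts are dense in T
      (∀ ⦃t₁ t₂⦄, T.Adj t₁ t₂ → ∃ (s₁ s₂ : τ) (p : T.Walk s₁ s₂),
        (X s₁).Nonempty ∧ (X s₂).Nonempty ∧ p.IsPath ∧ s(t₁, t₂) ∈ p.edges) ∧
      -- the fundamental cuts are exactly the bonds in M
      {F | ∃ t₁ t₂, T.Adj t₁ t₂ ∧
        F = cutEdges G (⋃ t ∈ {t | (T.deleteEdges {s(t₁, t₂)}).Reachable t₁ t}, X t)}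
        = {F | ∃ A ∈ M, F = cutEdges G A} :=
  stmt_12_general G M hM hnested
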